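/- For every positive rational a and every rational L, there exists a rational x with a < x < a + 1 and D(x) ≥ L. -/

import Mathlib

/-- The arithmetic derivative on `ℕ`: `D p = 1` for primes, `D (a*b) = D a * b + a * D b`;
explicitly `D n = n * Σ αᵢ / pᵢ` for `n = ∏ pᵢ ^ αᵢ`, and `D 0 = D 1 = 0`. -/
def arithDeriv (n : ℕ) : ℕ := ∑ p ∈ n.primeFactors, n.factorization p * (n / p)

/-- The logarithmic arithmetic derivative `ld n = D n / n = Σ αᵢ / pᵢ` of a natural number. -/
def natLogDeriv (n : ℕ) : ℚ := ∑ p ∈ n.primeFactors, (n.factorization p : ℚ) / p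

/-- The arithmetic derivative on `ℚ`: the unique function with `D p = 1` for primes
satisfying the Leibniz rule `D (x*y) = D x * y + x * D y`; explicitly
`D (± a/b) = ± (D a * b - a * D b) / b²` for coprime naturals `a`, `b`. -/
def ratArithDeriv (q : ℚ) : ℚ := q * (natLogDeriv q.num.natAbs - natLogDeriv q.den)
/-!
Take `x = 2 ^ n / m` with `m` odd and `2 ^ n / (a + 1) < m < 2 ^ n / a`; such an `m` exists once
the interval is longer than `2`. Then `D x = x * (n / 2 - ld m)`. Every prime factor of `m` is at
least `3` and `m < 3 ^ n` for large `n`, so `ld m ≤ Ω m / 3 ≤ n / 3` and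
`D x ≥ x * n / 6 > a * n / 6`, which exceeds `L` for large `n`.
-/

open Filter ArithmeticFunction
open scoped ArithmeticFunction.Omega

lemma cardFactors_eq_sum_primeFactors (n : ℕ) :
    Ω n = ∑ p ∈ n.primeFactors, n.factorization p := by
  rw [cardFactors_eq_sum_factorization, Finsupp.sum, Nat.support_factorization]

lemma pow_cardFactors_le {m q : ℕ} (hm : m ≠ 0) (hq : ∀ p ∈ m.primeFactors, q ≤ p) :
    q ^ Ω m ≤ m := by
  conv_rhs => rw [← Nat.prod_factorization_pow_eq_self hm]
  rw [cardFactors_eq_sum_primeFactors, Finsupp.prod, Nat.support_factorization,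
    ← Finset.prod_pow_eq_pow_sum]
  exact Finset.prod_le_prod' fun p hp => Nat.pow_le_pow_left (hq p hp) _

lemma natLogDeriv_le_cardFactors_div {m q : ℕ} (hq₀ : 0 < q)
    (hq : ∀ p ∈ m.primeFactors, q ≤ p) : natLogDeriv m ≤ Ω m / q := by
  rw [natLogDeriv, cardFactors_eq_sum_primeFactors]
  push_cast
  rw [Finset.sum_div]
  refine Finset.sum_le_sum fun p hp => ?_
  have : (q : ℚ) ≤ p := by exact_mod_cast hq p hp
  gcongr

lemma natLogDeriv_le_of_lt_pow {m q n : ℕ} (hq₁ : 1 < q)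
    (hq : ∀ p ∈ m.primeFactors, q ≤ p)
    (hm : m < q ^ n) : natLogDeriv m ≤ n / q := by
  rcases eq_or_ne m 0 with rfl | hm₀
  · simp only [natLogDeriv, Nat.primeFactors_zero, Finset.sum_empty]
    positivity
  have hΩ : Ω m ≤ n :=
    (Nat.pow_lt_pow_iff_right hq₁).mp ((pow_cardFactors_le hm₀ hq).trans_lt hm) |>.le
  calc natLogDeriv m ≤ Ω m / q := natLogDeriv_le_cardFactors_div (by omega) hq
    _ ≤ n / q := by gcongr

lemma three_le_of_mem_primeFactors_of_odd {m p : ℕ} (hm : Odd m) (hp : p ∈ m.primeFactors) :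
    3 ≤ p := by
  have := (Nat.prime_of_mem_primeFactors hp).two_le
  have := hm.ne_two_of_dvd_nat (Nat.dvd_of_mem_primeFactors hp)
  omega

lemma natLogDeriv_prime_pow {p : ℕ} (hp : p.Prime) (k : ℕ) : natLogDeriv (p ^ k) = k / p := by
  rcases eq_or_ne k 0 with rfl | hk
  · simp [natLogDeriv]
  rw [natLogDeriv, Nat.primeFactors_prime_pow hk hp, Finset.sum_singleton,
    hp.factorization_pow, Finsupp.single_eq_same]

lemma ratArithDeriv_natCast_div {u m : ℕ} (h : u.Coprime m) (hm : 0 < m) :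
    ratArithDeriv (u / m) = u / m * (natLogDeriv u - natLogDeriv m) := by
  have hm' : (0 : ℤ) < m := by exact_mod_cast hm
  have hcast : ((u : ℚ) / m) = ((u : ℤ) : ℚ) / ((m : ℤ) : ℚ) := by push_cast; rfl
  have hnum : ((u : ℚ) / m).num = u := by
    rw [hcast]; exact Rat.num_div_eq_of_coprime hm' (by simpa only [Int.natAbs_natCast] using h)
  have hden : ((u : ℚ) / m).den = m := by
    have := Rat.den_div_eq_of_coprime (a := u) hm' (by simpa only [Int.natAbs_natCast] using h)
    rw [← hcast] at this; exact_mod_cast this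
  rw [ratArithDeriv, hnum, hden, Int.natAbs_natCast]

lemma ratArithDeriv_two_pow_div_odd {n m : ℕ} (hm : Odd m) :
    ratArithDeriv (2 ^ n / m) = 2 ^ n / m * (n / 2 - natLogDeriv m) := by
  have h := ratArithDeriv_natCast_div
    (Nat.Coprime.pow_left n (Nat.coprime_two_left.mpr hm)) hm.pos
  push_cast at h
  rw [h, natLogDeriv_prime_pow Nat.prime_two]
  norm_num

lemma two_pow_div_mul_le_ratArithDeriv {n m : ℕ} (hm : Odd m) (hm₃ : m < 3 ^ n) :
    2 ^ n / m * (n / 6) ≤ ratArithDeriv (2 ^ n / m) := by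
  have hld : natLogDeriv m ≤ n / 3 :=
    mod_cast natLogDeriv_le_of_lt_pow (by norm_num)
      (fun _ hp => three_le_of_mem_primeFactors_of_odd hm hp) hm₃
  rw [ratArithDeriv_two_pow_div_odd hm]
  gcongr
  linarith

lemma exists_odd_nat_mem_Ioo {K : Type*} [Field K] [LinearOrder K] [IsStrictOrderedRing K]
    [FloorSemiring K] {lo hi : K} (hlo : 0 ≤ lo) (h : lo + 2 < hi) :
    ∃ m : ℕ, Odd m ∧ lo < m ∧ (m : K) < hi := by
  set k := ⌊(lo + 1) / 2⌋₊
  have hk₁ : (lo + 1) / 2 < k + 1 := Nat.lt_floor_add_one _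
  have hk₂ : (k : K) ≤ (lo + 1) / 2 := Nat.floor_le (by positivity)
  refine ⟨2 * k + 1, odd_two_mul_add_one k, ?_, ?_⟩ <;> push_cast <;> linarith

/-- For every positive rational `a` and every rational `L` there is a rational
`x ∈ (a, a+1)` with `D x ≥ L`. -/
theorem stmt_13 (a : ℚ) (ha : 0 < a) (L : ℚ) :
    ∃ x : ℚ, a < x ∧ x < a + 1 ∧ L ≤ ratArithDeriv x := by
  have hgap : ∀ᶠ n : ℕ in atTop, 2 ^ n / (a + 1) + 2 < 2 ^ n / a :=
    ((tendsto_pow_atTop_atTop_of_one_lt one_lt_two).eventually_gt_atTop (2 * a * (a + 1))).mono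
      fun n hn => by
      rw [div_add' _ _ _ (by positivity), div_lt_div_iff₀ (by positivity) ha]
      nlinarith
  have hthree : ∀ᶠ n : ℕ in atTop, 2 ^ n / a < 3 ^ n :=
    ((tendsto_pow_atTop_nhds_zero_of_lt_one (by norm_num) (by norm_num : (2 / 3 : ℚ) < 1))
      |>.eventually (gt_mem_nhds ha)).mono fun n hn => by
      rwa [div_lt_iff₀ ha, ← div_lt_iff₀' (by positivity), ← div_pow]
  have hL : ∀ᶠ n : ℕ in atTop, L ≤ a * (n / 6) :=
    (tendsto_natCast_atTop_atTop.eventually_ge_atTop (6 * L / a)).mono fun n hn => by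
      rw [div_le_iff₀ ha] at hn
      linarith
  obtain ⟨n, hn_gap, hn_three, hn_L⟩ := (hgap.and (hthree.and hL)).exists
  obtain ⟨m, hm, hm_lo, hm_hi⟩ := exists_odd_nat_mem_Ioo (by positivity) hn_gap
  have hm₀ : (0 : ℚ) < m := by exact_mod_cast hm.pos
  have hx : a < 2 ^ n / m := by rwa [lt_div_iff₀ hm₀, ← lt_div_iff₀' ha]
  refine ⟨2 ^ n / m, hx, ?_, ?_⟩
  · rwa [div_lt_iff₀ hm₀, ← div_lt_iff₀' (by positivity)]
  · have hm₃ : m < 3 ^ n := by exact_mod_cast hm_hi.trans hn_three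
    calc L ≤ a * (n / 6) := hn_L
      _ ≤ 2 ^ n / m * (n / 6) := by gcongr
      _ ≤ ratArithDeriv (2 ^ n / m) := two_pow_div_mul_le_ratArithDeriv hm hm₃
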